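/- Let X be a compact Priestley space with partial order ≤, let i : X → X be a continuous antitone map, and let + be a partial binary operation defined exactly on D₊ := {(x,y) ∈ X × X | y ≤ i(x)}, which is order-preserving in both coordinates, expanding (x ≤ x + y for all (x,y) ∈ D₊), upper continuous (continuous as a map from D₊, with the subspace topology inherited from the product (X,τ↑) × (X,τ↑), to (X,τ↑), where τ↑ is the topology of open upper sets of X), and such that for every x ∈ X there exists y ≤ i(x) with x + y = x. Assume that for every x ∈ X the set {x + w | w ≤ i(x)} is totally ordered, and that for every z ≥ x there exists k ≤ i(x) such that for all w ≤ i(x): x + w ≤ z if and only if w ≤ k. Let ⋆ be a partial binary operation defined exactly on D⋆ := {(x,y) ∈ X × X | i(x) ≰ y}, lower continuous (continuous as a map from D⋆, with the subspace topology inherited from (X,τ↓) × (X,τ↓), to (X,τ↓), where τ↓ is the topology of open lower sets), and such that for every (x,y) ∈ D⋆, x ⋆ y is the greatest lower bound in X of {x + w | w ≤ i(x), w ≰ y}. Then for all clopen lower sets a, b ⊆ X, the set f₊(a,b) is a clopen lower set, and the binary operation a ⊖_B b := f₊(a,b) on the bounded distributive lattice B of clopen lower sets of X satisfies, for all a, a',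 b, b' ∈ B: (a ∩ a') ⊖_B b = (a ⊖_B b) ∩ (a' ⊖_B b); (a ∪ a') ⊖_B b = (a ⊖_B b) ∪ (a' ⊖_B b); a ⊖_B (b ∩ b') = (a ⊖_B b) ∪ (a ⊖_B b'); a ⊖_B (b ∪ b') = (a ⊖_B b) ∩ (a ⊖_B b'); ∅ ⊖_B b = ∅; a ⊖_B X = ∅; and a ⊖_B ∅ = a. -/
import Mathlib

open Topology

def fplus {X : Type*} [Preorder X] (i : X → X) (p : X → X → X) (u v : Set X) : Set X :=
  {x | ∃ w, w ≤ i x ∧ w ∉ v ∧ p x w ∈ u}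

/-- The topology of open upper sets of an ordered topological space. -/
def upTop (X : Type*) [Preorder X] [TopologicalSpace X] : TopologicalSpace X :=
  TopologicalSpace.generateFrom {U : Set X | IsOpen U ∧ IsUpperSet U}

/-- The topology of open lower sets of an ordered topological space. -/
def downTop (X : Type*) [Preorder X] [TopologicalSpace X] : TopologicalSpace X :=
  TopologicalSpace.generateFrom {U : Set X | IsOpen U ∧ IsLowerSet U}

/-- The subspace topology on `D ⊆ X × X` induced from the product of `(X, t)` with itself. -/
def subProdTop {X : Type*} (t : TopologicalSpace X) (D : Set (X × X)) :
    TopologicalSpace D :=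
  TopologicalSpace.induced Subtype.val (@instTopologicalSpaceProd X X t t)

section Helpers

variable {X : Type*} [TopologicalSpace X]

theorem my_isOpen_upTop_iff [Preorder X] {U : Set X} :
    IsOpen[upTop X] U ↔ IsOpen U ∧ IsUpperSet U := by
  constructor
  · intro h
    induction h with
    | basic V hV => exact hV
    | univ => exact ⟨isOpen_univ, isUpperSet_univ⟩
    | inter V W _ _ h1 h2 => exact ⟨h1.1.inter h2.1, h1.2.inter h2.2⟩
    | sUnion S _ hS =>
        exact ⟨isOpen_sUnion fun t ht => (hS t ht).1,
          isUpperSet_sUnion fun t ht => (hS t ht).2⟩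
  · exact fun h => TopologicalSpace.GenerateOpen.basic _ h

theorem my_isOpen_downTop_iff [Preorder X] {U : Set X} :
    IsOpen[downTop X] U ↔ IsOpen U ∧ IsLowerSet U := by
  constructor
  · intro h
    induction h with
    | basic V hV => exact hV
    | univ => exact ⟨isOpen_univ, isLowerSet_univ⟩
    | inter V W _ _ h1 h2 => exact ⟨h1.1.inter h2.1, h1.2.inter h2.2⟩
    | sUnion S _ hS =>
        exact ⟨isOpen_sUnion fun t ht => (hS t ht).1,
          isLowerSet_sUnion fun t ht => (hS t ht).2⟩
  · exact fun h => TopologicalSpace.GenerateOpen.basic _ h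

theorem my_prod_le {Y Z : Type*} {t₁ t₂ : TopologicalSpace Y} {u₁ u₂ : TopologicalSpace Z}
    (h1 : t₁ ≤ t₂) (h2 : u₁ ≤ u₂) :
    @instTopologicalSpaceProd Y Z t₁ u₁ ≤ @instTopologicalSpaceProd Y Z t₂ u₂ :=
  inf_le_inf (induced_mono h1) (induced_mono h2)

variable [PartialOrder X] [PriestleySpace X]

theorem my_le_closed : IsClosed {q : X × X | q.1 ≤ q.2} := by
  rw [← isOpen_compl_iff, isOpen_iff_forall_mem_open]
  rintro ⟨x, y⟩ hq
  obtain ⟨U, hU, hUup, hx, hy⟩ := exists_isClopen_upper_of_not_le hq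
  refine ⟨U ×ˢ Uᶜ, ?_, hU.isOpen.prod hU.compl.isOpen, ⟨hx, hy⟩⟩
  rintro ⟨u, v⟩ ⟨hu, hv⟩ hle
  exact hv (hUup hle hu)

theorem my_Iic_closed (x : X) : IsClosed (Set.Iic x) :=
  my_le_closed.preimage (continuous_id.prodMk continuous_const)

theorem my_Ici_closed (x : X) : IsClosed (Set.Ici x) :=
  my_le_closed.preimage (continuous_const.prodMk continuous_id)

variable [CompactSpace X]

theorem my_glb_mem_closure {S : Set X} (hne : S.Nonempty) (hdir : DirectedOn (· ≥ ·) S)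
    {g : X} (hg : IsGLB S g) : g ∈ closure S := by
  have : Nonempty S := hne.to_subtype
  have htd : Directed (· ⊇ ·) (fun s : S => Set.Iic s.1 ∩ closure S) := by
    intro u v
    obtain ⟨w, hw, h1, h2⟩ := hdir u.1 u.2 v.1 v.2
    exact ⟨⟨w, hw⟩, fun z hz => ⟨hz.1.trans h1, hz.2⟩, fun z hz => ⟨hz.1.trans h2, hz.2⟩⟩
  obtain ⟨z, hz⟩ := IsCompact.nonempty_iInter_of_directed_nonempty_isCompact_isClosed
      (fun s : S => Set.Iic s.1 ∩ closure S) htd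
      (fun s => ⟨s.1, le_rfl, subset_closure s.2⟩)
      (fun s => ((my_Iic_closed _).inter isClosed_closure).isCompact)
      (fun s => (my_Iic_closed _).inter isClosed_closure)
  simp only [Set.mem_iInter, Set.mem_inter_iff, Set.mem_Iic] at hz
  have hzc : z ∈ closure S := (hz ⟨hne.some, hne.some_mem⟩).2
  have hzlb : z ∈ lowerBounds S := fun u hu => (hz ⟨u, hu⟩).1
  have h1 : z ≤ g := hg.2 hzlb
  have h2 : g ≤ z := by
    have hsub : closure S ⊆ Set.Ici g :=
      closure_minimal (fun u hu => hg.1 hu) (my_Ici_closed g)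
    exact hsub hzc
  exact (le_antisymm h2 h1) ▸ hzc

theorem my_exists_max {S : Set X} (hne : S.Nonempty) (hdir : DirectedOn (· ≤ ·) S)
    (hcl : IsClosed S) : ∃ m ∈ S, ∀ w ∈ S, w ≤ m := by
  have : Nonempty S := hne.to_subtype
  have htd : Directed (· ⊇ ·) (fun s : S => Set.Ici s.1 ∩ S) := by
    intro u v
    obtain ⟨w, hw, h1, h2⟩ := hdir u.1 u.2 v.1 v.2
    exact ⟨⟨w, hw⟩, fun z hz => ⟨h1.trans hz.1, hz.2⟩, fun z hz => ⟨h2.trans hz.1, hz.2⟩⟩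
  obtain ⟨z, hz⟩ := IsCompact.nonempty_iInter_of_directed_nonempty_isCompact_isClosed
      (fun s : S => Set.Ici s.1 ∩ S) htd
      (fun s => ⟨s.1, le_rfl, s.2⟩)
      (fun s => ((my_Ici_closed _).inter hcl).isCompact)
      (fun s => (my_Ici_closed _).inter hcl)
  simp only [Set.mem_iInter, Set.mem_inter_iff, Set.mem_Ici] at hz
  exact ⟨z, (hz ⟨hne.some, hne.some_mem⟩).2, fun w hw => (hz ⟨w, hw⟩).1⟩

end Helpers

theorem stmt14 {X : Type*} [TopologicalSpace X] [PartialOrder X] [PriestleySpace X]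
    [CompactSpace X]
    (i : X → X) (hi : Antitone i) (hicont : Continuous i)
    (p : X → X → X)
    (hmono : ∀ x y x' y' : X, y ≤ i x → x' ≤ x → y' ≤ y → p x' y' ≤ p x y)
    (hexp : ∀ x y : X, y ≤ i x → x ≤ p x y)
    (hpcont : @Continuous {q : X × X // q.2 ≤ i q.1} X
      (subProdTop (upTop X) {q : X × X | q.2 ≤ i q.1}) (upTop X)
      (fun q => p q.1.1 q.1.2))
    (hunit : ∀ x : X, ∃ y, y ≤ i x ∧ p x y = x)
    (hchain : ∀ x : X, IsChain (· ≤ ·) {z : X | ∃ w, w ≤ i x ∧ z = p x w})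
    (hadj : ∀ x z : X, x ≤ z → ∃ k, k ≤ i x ∧ ∀ w, w ≤ i x → (p x w ≤ z ↔ w ≤ k))
    (s : X → X → X)
    (hscont : @Continuous {q : X × X // ¬ i q.1 ≤ q.2} X
      (subProdTop (downTop X) {q : X × X | ¬ i q.1 ≤ q.2}) (downTop X)
      (fun q => s q.1.1 q.1.2))
    (hglb : ∀ x y : X, ¬ i x ≤ y →
      IsGLB {z : X | ∃ w, w ≤ i x ∧ ¬ w ≤ y ∧ z = p x w} (s x y)) :
    (∀ a b : Set X, IsClopen a → IsLowerSet a → IsClopen b → IsLowerSet b →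
      IsClopen (fplus i p a b) ∧ IsLowerSet (fplus i p a b)) ∧
    (∀ a a' b : Set X, IsClopen a → IsLowerSet a → IsClopen a' → IsLowerSet a' →
      IsClopen b → IsLowerSet b →
      fplus i p (a ∩ a') b = fplus i p a b ∩ fplus i p a' b ∧
      fplus i p (a ∪ a') b = fplus i p a b ∪ fplus i p a' b) ∧
    (∀ a b b' : Set X, IsClopen a → IsLowerSet a → IsClopen b → IsLowerSet b →
      IsClopen b' → IsLowerSet b' →
      fplus i p a (b ∩ b') = fplus i p a b ∪ fplus i p a b' ∧
      fplus i p a (b ∪ b') = fplus i p a b ∩ fplus i p a b') ∧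
    (∀ b : Set X, IsClopen b → IsLowerSet b → fplus i p ∅ b = ∅) ∧
    (∀ a : Set X, IsClopen a → IsLowerSet a →
      fplus i p a Set.univ = ∅ ∧ fplus i p a ∅ = a) := by
  classical
  -- lower set
  have hflower : ∀ (a b : Set X), IsLowerSet a → IsLowerSet (fplus i p a b) := by
    intro a b hal x x' hle hx
    obtain ⟨w, hw1, hw2, hw3⟩ := hx
    exact ⟨w, hw1.trans (hi hle), hw2, hal (hmono x w x' w hw1 hle le_rfl) hw3⟩
  -- a ⊖ ∅ = a
  have hEmptyR : ∀ a : Set X, IsLowerSet a → fplus i p a ∅ = a := by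
    intro a hal
    ext x
    constructor
    · rintro ⟨w, h1, _, h3⟩
      exact hal (hexp x w h1) h3
    · intro hx
      obtain ⟨y, hy1, hy2⟩ := hunit x
      exact ⟨y, hy1, Set.notMem_empty y, by rw [hy2]; exact hx⟩
  -- the big closed set
  have hτle : (‹TopologicalSpace X› : TopologicalSpace X) ≤ upTop X := by
    rw [TopologicalSpace.le_def]
    exact fun U hU => (my_isOpen_upTop_iff.1 hU).1
  have hsubcoarse : ∀ V : Set {q : X × X // q.2 ≤ i q.1},
      IsOpen[subProdTop (upTop X) {q : X × X | q.2 ≤ i q.1}] V → IsOpen V := by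
    intro V hV
    have hV' : ∃ W : Set (X × X),
        IsOpen[@instTopologicalSpaceProd X X (upTop X) (upTop X)] W ∧
        Subtype.val ⁻¹' W = V := hV
    obtain ⟨W, hW, rfl⟩ := hV'
    have hWτ : IsOpen W := (TopologicalSpace.le_def.1 (my_prod_le hτle hτle)) W hW
    exact hWτ.preimage continuous_subtype_val
  have hEclosed : ∀ a : Set X, IsClopen a → IsLowerSet a →
      IsClosed {q : X × X | q.2 ≤ i q.1 ∧ p q.1 q.2 ∈ a} := by
    intro a hac hal
    have hacomp : IsOpen[upTop X] aᶜ :=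
      my_isOpen_upTop_iff.2 ⟨hac.compl.isOpen, hal.compl⟩
    have hpre : IsOpen {q : {q : X × X // q.2 ≤ i q.1} | p q.1.1 q.1.2 ∈ aᶜ} :=
      hsubcoarse _ (@Continuous.isOpen_preimage _ _
        (subProdTop (upTop X) {q : X × X | q.2 ≤ i q.1}) (upTop X) _ hpcont _ hacomp)
    have hcl : IsClosed {q : {q : X × X // q.2 ≤ i q.1} | p q.1.1 q.1.2 ∈ a} := by
      rw [← isOpen_compl_iff]
      exact hpre
    have hgr : IsClosed {q : X × X | q.2 ≤ i q.1} :=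
      my_le_closed.preimage (continuous_snd.prodMk (hicont.comp continuous_fst))
    have himg : {q : X × X | q.2 ≤ i q.1 ∧ p q.1 q.2 ∈ a}
        = Subtype.val '' {q : {q : X × X // q.2 ≤ i q.1} | p q.1.1 q.1.2 ∈ a} := by
      ext q
      constructor
      · rintro ⟨h1, h2⟩
        exact ⟨⟨q, h1⟩, h2, rfl⟩
      · rintro ⟨⟨r, hr⟩, h2, rfl⟩
        exact ⟨hr, h2⟩
    rw [himg]
    exact hgr.isClosedMap_subtype_val _ hcl
  -- closedness of fplus
  have hfclosed : ∀ a b : Set X, IsClopen a → IsLowerSet a → IsClopen b →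
      IsClosed (fplus i p a b) := by
    intro a b hac hal hbc
    have hE : IsClosed ({q : X × X | q.2 ≤ i q.1 ∧ p q.1 q.2 ∈ a} ∩ {q : X × X | q.2 ∉ b}) :=
      (hEclosed a hac hal).inter (isClosed_compl_iff.2 (hbc.2.preimage continuous_snd))
    have himg : fplus i p a b
        = Prod.fst '' ({q : X × X | q.2 ≤ i q.1 ∧ p q.1 q.2 ∈ a} ∩ {q : X × X | q.2 ∉ b}) := by
      ext x
      constructor
      · rintro ⟨w, h1, h2, h3⟩
        exact ⟨(x, w), ⟨⟨h1, h3⟩, h2⟩, rfl⟩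
      · rintro ⟨⟨x', w⟩, ⟨⟨h1, h3⟩, h2⟩, rfl⟩
        exact ⟨w, h1, h2, h3⟩
    rw [himg]
    exact (hE.isCompact.image continuous_fst).isClosed
  -- openness of fplus
  have hfopen : ∀ a b : Set X, IsClopen a → IsLowerSet a → IsClopen b → IsLowerSet b →
      IsOpen (fplus i p a b) := by
    intro a b hac hal hbc hbl
    rcases Set.eq_empty_or_nonempty b with rfl | hbne
    · rw [hEmptyR a hal]
      exact hac.2
    have hadown : IsOpen[downTop X] a := my_isOpen_downTop_iff.2 ⟨hac.2, hal⟩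
    have hVex : ∃ W : Set (X × X),
        IsOpen[@instTopologicalSpaceProd X X (downTop X) (downTop X)] W ∧
        Subtype.val ⁻¹' W
          = (fun q : {q : X × X // ¬ i q.1 ≤ q.2} => s q.1.1 q.1.2) ⁻¹' a :=
      @Continuous.isOpen_preimage _ _
        (subProdTop (downTop X) {q : X × X | ¬ i q.1 ≤ q.2}) (downTop X) _ hscont _ hadown
    obtain ⟨W, hWopen, hWeq⟩ := hVex
    rw [isOpen_iff_forall_mem_open]
    intro x₀ hx₀
    obtain ⟨w₀, hw₀1, hw₀2, hw₀3⟩ := hx₀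
    have hixb : i x₀ ∉ b := fun h => hw₀2 (hbl hw₀1 h)
    have hmemW : ∀ y ∈ b, (x₀, y) ∈ W := by
      intro y hy
      have hixy : ¬ i x₀ ≤ y := fun h => hixb (hbl h hy)
      have hwy : ¬ w₀ ≤ y := fun h => hw₀2 (hbl h hy)
      have hsy : s x₀ y ∈ a := hal ((hglb x₀ y hixy).1 ⟨w₀, hw₀1, hwy, rfl⟩) hw₀3
      have hm : (⟨(x₀, y), hixy⟩ : {q : X × X // ¬ i q.1 ≤ q.2}) ∈ Subtype.val ⁻¹' W := by
        rw [hWeq]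
        exact hsy
      exact hm
    have hrect : ∀ y : b, ∃ U V : Set X,
        IsOpen U ∧ IsLowerSet U ∧ IsOpen V ∧ x₀ ∈ U ∧ y.1 ∈ V ∧ U ×ˢ V ⊆ W := by
      intro y
      obtain ⟨U, V, hU, hV, hxU, hyV, hUV⟩ :=
        (@isOpen_prod_iff X X (downTop X) (downTop X) W).1 hWopen x₀ y.1 (hmemW y.1 y.2)
      obtain ⟨hUo, hUl⟩ := my_isOpen_downTop_iff.1 hU
      exact ⟨U, V, hUo, hUl, (my_isOpen_downTop_iff.1 hV).1, hxU, hyV, hUV⟩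
    choose U V hUo hUl hVo hxU hyV hUV using hrect
    have hbcpt : IsCompact b := hbc.1.isCompact
    obtain ⟨t, hcover⟩ := hbcpt.elim_finite_subcover V hVo
      (fun y hy => Set.mem_iUnion.2 ⟨⟨y, hy⟩, hyV ⟨y, hy⟩⟩)
    refine ⟨(i ⁻¹' bᶜ) ∩ ⋂ y ∈ t, U y, ?_, ?_, ?_⟩
    · -- the neighbourhood is contained in fplus
      rintro x ⟨hx1, hx2⟩
      have hxib : i x ∉ b := hx1
      have hsall : ∀ y ∈ b, s x y ∈ a := by
        intro y hy
        obtain ⟨z, hzt, hyz⟩ := Set.mem_iUnion₂.1 (hcover hy)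
        have hxz : x ∈ U z := by
          have := Set.mem_iInter₂.1 hx2 z hzt
          exact this
        have hxyW : (x, y) ∈ W := hUV z ⟨hxz, hyz⟩
        have hixy : ¬ i x ≤ y := fun h => hxib (hbl h hy)
        have hm : (⟨(x, y), hixy⟩ : {q : X × X // ¬ i q.1 ≤ q.2}) ∈ Subtype.val ⁻¹' W := hxyW
        rw [hWeq] at hm
        exact hm
      -- witnesses from the GLB characterization
      have hwitness : ∀ y ∈ b, ∃ w, w ≤ i x ∧ ¬ w ≤ y ∧ p x w ∈ a := by
        intro y hy
        have hixy : ¬ i x ≤ y := fun h => hxib (hbl h hy)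
        have hglb' := hglb x y hixy
        have hSne : Set.Nonempty {z : X | ∃ w, w ≤ i x ∧ ¬ w ≤ y ∧ z = p x w} :=
          ⟨p x (i x), i x, le_rfl, hixy, rfl⟩
        have hSchain : IsChain (· ≤ ·) {z : X | ∃ w, w ≤ i x ∧ ¬ w ≤ y ∧ z = p x w} :=
          (hchain x).mono (fun z hz => by obtain ⟨w, h1, _, h2⟩ := hz; exact ⟨w, h1, h2⟩)
        have hdir : DirectedOn (· ≥ ·) {z : X | ∃ w, w ≤ i x ∧ ¬ w ≤ y ∧ z = p x w} := by
          intro z hz z' hz'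
          rcases hSchain.total hz hz' with h | h
          · exact ⟨z, hz, le_refl z, h⟩
          · exact ⟨z', hz', h, le_refl z'⟩
        have hcl : s x y ∈ closure {z : X | ∃ w, w ≤ i x ∧ ¬ w ≤ y ∧ z = p x w} :=
          my_glb_mem_closure hSne hdir hglb'
        obtain ⟨z, hz1, hz2⟩ := mem_closure_iff.1 hcl a hac.2 (hsall y hy)
        obtain ⟨w, hw1, hw2, rfl⟩ := hz2
        exact ⟨w, hw1, hw2, hz1⟩
      have hFclosed : IsClosed {w : X | w ≤ i x ∧ p x w ∈ a} :=
        (hEclosed a hac hal).preimage (continuous_const.prodMk continuous_id)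
      obtain ⟨y₀, hy₀⟩ := hbne
      obtain ⟨w₁, hw₁1, _, hw₁3⟩ := hwitness y₀ hy₀
      have hFne : Set.Nonempty {w : X | w ≤ i x ∧ p x w ∈ a} := ⟨w₁, hw₁1, hw₁3⟩
      have hFdir : DirectedOn (· ≤ ·) {w : X | w ≤ i x ∧ p x w ∈ a} := by
        intro w hw w' hw'
        rcases (hchain x).total ⟨w, hw.1, rfl⟩ ⟨w', hw'.1, rfl⟩ with hc | hc
        · obtain ⟨k, hk, hkiff⟩ := hadj x (p x w') (hexp x w' hw'.1)
          exact ⟨k, ⟨hk, hal ((hkiff k hk).2 le_rfl) hw'.2⟩,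
            (hkiff w hw.1).1 hc, (hkiff w' hw'.1).1 le_rfl⟩
        · obtain ⟨k, hk, hkiff⟩ := hadj x (p x w) (hexp x w hw.1)
          exact ⟨k, ⟨hk, hal ((hkiff k hk).2 le_rfl) hw.2⟩,
            (hkiff w hw.1).1 le_rfl, (hkiff w' hw'.1).1 hc⟩
      obtain ⟨m, hmF, hmax⟩ := my_exists_max hFne hFdir hFclosed
      by_cases hmb : m ∈ b
      · obtain ⟨w, hw1, hw2, hw3⟩ := hwitness m hmb
        exact absurd (hmax w ⟨hw1, hw3⟩) hw2
      · exact ⟨m, hmF.1, hmb, hmF.2⟩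
    · exact (hbc.compl.isOpen.preimage hicont).inter
        (isOpen_biInter_finset fun y _ => hUo y)
    · exact ⟨hixb, Set.mem_iInter₂.2 fun y _ => hxU y⟩
  -- lattice identities
  have hIdInter : ∀ a a' b : Set X, IsLowerSet a → IsLowerSet a' →
      fplus i p (a ∩ a') b = fplus i p a b ∩ fplus i p a' b := by
    intro a a' b hal hal'
    ext x
    constructor
    · rintro ⟨w, h1, h2, h3⟩
      exact ⟨⟨w, h1, h2, h3.1⟩, ⟨w, h1, h2, h3.2⟩⟩
    · rintro ⟨⟨w, h1, h2, h3⟩, ⟨w', h1', h2', h3'⟩⟩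
      rcases (hchain x).total ⟨w, h1, rfl⟩ ⟨w', h1', rfl⟩ with hc | hc
      · exact ⟨w, h1, h2, h3, hal' hc h3'⟩
      · exact ⟨w', h1', h2', hal hc h3, h3'⟩
  have hIdUnion : ∀ a a' b : Set X,
      fplus i p (a ∪ a') b = fplus i p a b ∪ fplus i p a' b := by
    intro a a' b
    ext x
    constructor
    · rintro ⟨w, h1, h2, h3 | h3⟩
      · exact Or.inl ⟨w, h1, h2, h3⟩
      · exact Or.inr ⟨w, h1, h2, h3⟩
    · rintro (⟨w, h1, h2, h3⟩ | ⟨w, h1, h2, h3⟩)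
      · exact ⟨w, h1, h2, Or.inl h3⟩
      · exact ⟨w, h1, h2, Or.inr h3⟩
  have hIdInterR : ∀ a b b' : Set X,
      fplus i p a (b ∩ b') = fplus i p a b ∪ fplus i p a b' := by
    intro a b b'
    ext x
    constructor
    · rintro ⟨w, h1, h2, h3⟩
      by_cases hw : w ∈ b
      · exact Or.inr ⟨w, h1, fun hb' => h2 ⟨hw, hb'⟩, h3⟩
      · exact Or.inl ⟨w, h1, hw, h3⟩
    · rintro (⟨w, h1, h2, h3⟩ | ⟨w, h1, h2, h3⟩)
      · exact ⟨w, h1, fun h => h2 h.1, h3⟩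
      · exact ⟨w, h1, fun h => h2 h.2, h3⟩
  have hIdUnionR : ∀ a b b' : Set X, IsLowerSet a → IsLowerSet b → IsLowerSet b' →
      fplus i p a (b ∪ b') = fplus i p a b ∩ fplus i p a b' := by
    intro a b b' hal hbl hbl'
    ext x
    constructor
    · rintro ⟨w, h1, h2, h3⟩
      exact ⟨⟨w, h1, fun h => h2 (Or.inl h), h3⟩, ⟨w, h1, fun h => h2 (Or.inr h), h3⟩⟩
    · rintro ⟨⟨w, h1, h2, h3⟩, ⟨w', h1', h2', h3'⟩⟩
      have key : ∀ z : X, z ∈ a → x ≤ z → p x w ≤ z → p x w' ≤ z →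
          x ∈ fplus i p a (b ∪ b') := by
        intro z hz hxz hpw hpw'
        obtain ⟨k, hk, hkiff⟩ := hadj x z hxz
        have hwk : w ≤ k := (hkiff w h1).1 hpw
        have hw'k : w' ≤ k := (hkiff w' h1').1 hpw'
        refine ⟨k, hk, ?_, hal ((hkiff k hk).2 le_rfl) hz⟩
        rintro (hkb | hkb')
        · exact h2 (hbl hwk hkb)
        · exact h2' (hbl' hw'k hkb')
      rcases (hchain x).total ⟨w, h1, rfl⟩ ⟨w', h1', rfl⟩ with hc | hc
      · exact key (p x w') h3' (hexp x w' h1') hc le_rfl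
      · exact key (p x w) h3 (hexp x w h1) le_rfl hc
  have hEmptyL : ∀ b : Set X, fplus i p ∅ b = ∅ := by
    intro b
    ext x
    simp only [Set.mem_empty_iff_false, iff_false]
    rintro ⟨w, _, _, h⟩
    exact h
  have hUnivR : ∀ a : Set X, fplus i p a Set.univ = ∅ := by
    intro a
    ext x
    simp only [Set.mem_empty_iff_false, iff_false]
    rintro ⟨w, _, h2, _⟩
    exact h2 (Set.mem_univ w)
  refine ⟨?_, ?_, ?_, ?_, ?_⟩
  · intro a b hac hal hbc hbl
    exact ⟨⟨hfclosed a b hac hal hbc, hfopen a b hac hal hbc hbl⟩, hflower a b hal⟩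
  · intro a a' b hac hal hac' hal' hbc hbl
    exact ⟨hIdInter a a' b hal hal', hIdUnion a a' b⟩
  · intro a b b' hac hal hbc hbl hbc' hbl'
    exact ⟨hIdInterR a b b', hIdUnionR a b b' hal hbl hbl'⟩
  · intro b _ _
    exact hEmptyL b
  · intro a hac hal
    exact ⟨hUnivR a, hEmptyR a hal⟩
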